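/- arXiv:2507.00839 — 4 statements merged into one kernel-verified Lean document; each statement's English description precedes it below -/
import Mathlib

section
/- Under the timestamp protocol where the global write timestamp t_w is atomically incremented to assign commit timestamp t to a writer, and the global read timestamp t_r is advanced from t-1 to t only after the writer with commit timestamp t commits, it holds at all times that t_r ≤ t_w, and a reader with start timestamp t_r only observes versions whose commit timestamps form a downward-closed (prefix) set of committed transactions {1, 2, ..., t_r}. -/
/-- State of the timestamp protocol: the global write timestamp `tw`, the
global read timestamp `tr`, and the set of commit timestamps of committed
writers. -/
structure TSState where
  tw : ℕ
  tr : ℕ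
  committed : Finset ℕ

/-- Steps of the timestamp protocol: a writer atomically increments `tw`
to obtain its commit timestamp; writer `t` (with `t ≤ tw`) commits; and
`tr` is advanced from `t - 1` to `t` only after writer `t` has committed. -/
inductive TSStep : TSState → TSState → Prop
  | assign (s : TSState) : TSStep s ⟨s.tw + 1, s.tr, s.committed⟩
  | commit (s : TSState) (t : ℕ) (h1 : 1 ≤ t) (h2 : t ≤ s.tw)
      (h3 : t ∉ s.committed) : TSStep s ⟨s.tw, s.tr, insert t s.committed⟩
  | advance (s : TSState) (h : s.tr + 1 ∈ s.committed) :
      TSStep s ⟨s.tw, s.tr + 1, s.committed⟩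

/-- **Timestamp protocol invariant.** Starting from `tw = tr = 0` with no
committed transactions, at all times `tr ≤ tw`, and the commit timestamps
visible to a reader with start timestamp `tr` form the downward-closed set
`{1, 2, ..., tr}`: every timestamp in this range is committed. -/
theorem timestamp_protocol_invariant (s : TSState)
    (hreach : Relation.ReflTransGen TSStep ⟨0, 0, ∅⟩ s) :
    s.tr ≤ s.tw ∧ ∀ i, 1 ≤ i → i ≤ s.tr → i ∈ s.committed := by
  suffices h : s.tr ≤ s.tw ∧ (∀ i ∈ s.committed, i ≤ s.tw) ∧
      (∀ i, 1 ≤ i → i ≤ s.tr → i ∈ s.committed) by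
    exact ⟨h.1, h.2.2⟩
  induction hreach with
  | refl => exact ⟨le_rfl, by simp, fun i h1 h2 => absurd (h1.trans h2) (by norm_num)⟩
  | @tail b c _ hstep ih =>
    obtain ⟨h1, h2, h3⟩ := ih
    cases hstep with
    | assign =>
      exact ⟨h1.trans (Nat.le_succ _), fun i hi => (h2 i hi).trans (Nat.le_succ _), h3⟩
    | commit t ht1 ht2 ht3 =>
      refine ⟨h1, ?_, fun i hi1 hi2 => Finset.mem_insert_of_mem (h3 i hi1 hi2)⟩
      intro i hi
      rcases Finset.mem_insert.mp hi with rfl | hi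
      · exact ht2
      · exact h2 i hi
    | advance hc =>
      refine ⟨h2 _ hc, h2, fun i hi1 hi2 => ?_⟩
      rcases Nat.lt_or_ge i (b.tr + 1) with h | h
      · exact h3 i hi1 (Nat.lt_succ_iff.mp h)
      · exact (Nat.le_antisymm hi2 h) ▸ hc
end

section
/- In the subgraph-versioning scheme where each writer commits atomically new versions to all subgraphs it modifies with a single timestamp t, any reader with start timestamp s that, for each subgraph, selects the latest version with timestamp ≤ s, obtains a snapshot equal to the graph state resulting from applying exactly the set of all transactions with commit timestamps ≤ s in timestamp order. Hence the reader's snapshot is consistent. -/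
/-- Sequential graph state after applying transactions `1, ..., t` in
timestamp order: transaction `t+1` updates exactly the subgraphs in
`modifies (t+1)`, deriving each new subgraph version from the previous
latest version. -/
def seqState {p : ℕ} {σ : Type} (init : Fin p → σ)
    (modifies : ℕ → Finset (Fin p)) (upd : ℕ → Fin p → σ → σ) :
    ℕ → Fin p → σ
  | 0 => init
  | t + 1 => fun i =>
      if i ∈ modifies (t + 1) then upd (t + 1) i (seqState init modifies upd t i)
      else seqState init modifies upd t i

/-- The timestamps at which subgraph `i` has a version, up to time `s`
(version 0 is the initial state, and a version tagged `t ≥ 1` exists iff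
transaction `t` modified subgraph `i`). -/
def versionTimes {p : ℕ} (modifies : ℕ → Finset (Fin p)) (s : ℕ) (i : Fin p) :
    Finset ℕ :=
  (Finset.range (s + 1)).filter (fun t => t = 0 ∨ i ∈ modifies t)

theorem versionTimes_nonempty {p : ℕ} (modifies : ℕ → Finset (Fin p)) (s : ℕ)
    (i : Fin p) : (versionTimes modifies s i).Nonempty :=
  ⟨0, by simp [versionTimes]⟩

lemma seqState_stable {p : ℕ} {σ : Type} (init : Fin p → σ)
    (modifies : ℕ → Finset (Fin p)) (upd : ℕ → Fin p → σ → σ)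
    (m : ℕ) (i : Fin p) :
    ∀ s, m ≤ s → (∀ t, m < t → t ≤ s → i ∉ modifies t) →
    seqState init modifies upd s i = seqState init modifies upd m i := by
  intro s
  induction s with
  | zero => intro h _; rw [Nat.le_zero.mp h]
  | succ n ih =>
      intro hms hmod
      rcases Nat.eq_or_lt_of_le hms with h | h
      · rw [h]
      · have hn : m ≤ n := Nat.lt_succ_iff.mp h
        have hni : i ∉ modifies (n+1) := hmod (n+1) h (le_refl _)
        simp only [seqState, if_neg hni]
        exact ih hn (fun t h1 h2 => hmod t h1 (Nat.le_succ_of_le h2))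

/-- **Snapshot consistency of subgraph-centric versioning.** A reader with
start timestamp `s` that, for each subgraph, selects the version with the
largest timestamp `≤ s` obtains exactly the graph state resulting from
applying all transactions with commit timestamps `≤ s` in timestamp order. -/
theorem snapshot_consistent {p : ℕ} {σ : Type} (init : Fin p → σ)
    (modifies : ℕ → Finset (Fin p)) (upd : ℕ → Fin p → σ → σ)
    (s : ℕ) (i : Fin p) :
    seqState init modifies upd
      ((versionTimes modifies s i).max' (versionTimes_nonempty modifies s i)) i
      = seqState init modifies upd s i := by
  set m := (versionTimes modifies s i).max' (versionTimes_nonempty modifies s i) with hm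
  have hmem : m ∈ versionTimes modifies s i := Finset.max'_mem _ _
  have hms : m ≤ s := by
    have := (Finset.mem_filter.mp hmem).1
    simpa [Nat.lt_succ_iff] using Finset.mem_range.mp this
  refine (seqState_stable init modifies upd m i s hms ?_).symm
  intro t h1 h2 hmod
  have ht : t ∈ versionTimes modifies s i := by
    simp [versionTimes, Nat.lt_succ_iff, h2, hmod]
  exact absurd (Finset.le_max' _ _ ht) (not_le.mpr h1)
end

section
/- With reference-counting garbage collection on a forest of versioned tree nodes, where each node's reference count equals its number of parents across live versions, deleting a version and recursively decrementing counts reclaims exactly the set of nodes reachable only from that version and from no other live version. -/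
/-- The set of nodes reclaimed by reference-counting garbage collection after
deleting the root (version) `r`: a non-root node is reclaimed when its
reference count reaches `0`, i.e. when every one of its parents is either the
deleted root `r` or has itself been reclaimed (counts are decremented
recursively top-down). Roots other than `r` are never reclaimed. -/
inductive Reclaimed {N : Type} (P : N → N → Prop) (roots : Set N) (r : N) : N → Prop
  | intro (v : N) (hv : v ∉ roots)
      (hall : ∀ u, P u v → u ≠ r → Reclaimed P roots r u) :
      Reclaimed P roots r v

/-- **Correctness of reference-counting GC.** On a DAG of versioned tree nodes
(`P u v` meaning `u` is a parent of `v`; the parent relation is well-founded,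
i.e. acyclic, and every non-root node has at least one parent), deleting the
live root `r` and recursively decrementing reference counts reclaims exactly
the nodes reachable from `r` and from no other live root. -/
theorem refcount_gc_correct {N : Type} (P : N → N → Prop) (roots : Set N)
    (r : N) (hr : r ∈ roots)
    (hacyc : WellFounded P)
    (hparent : ∀ v, v ∉ roots → ∃ u, P u v)
    (hroots : ∀ v ∈ roots, ∀ u, ¬ P u v) :
    ∀ v, v ≠ r →
      (Reclaimed P roots r v ↔
        (Relation.ReflTransGen P r v ∧
          ∀ r' ∈ roots, r' ≠ r → ¬ Relation.ReflTransGen P r' v)) := by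
  -- every node is reachable from some root
  have reach_root : ∀ v, ∃ ρ ∈ roots, Relation.ReflTransGen P ρ v := by
    intro v
    induction v using hacyc.induction with
    | _ v ih =>
      by_cases hv : v ∈ roots
      · exact ⟨v, hv, Relation.ReflTransGen.refl⟩
      · obtain ⟨u, hu⟩ := hparent v hv
        obtain ⟨ρ, hρ, hpath⟩ := ih u hu
        exact ⟨ρ, hρ, hpath.tail hu⟩
  -- roots have no nontrivial incoming paths
  have root_no_in : ∀ ρ ∈ roots, ∀ w, Relation.ReflTransGen P w ρ → w = ρ := by
    intro ρ hρ w hw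
    cases hw with
    | refl => rfl
    | tail _ h => exact absurd h (hroots ρ hρ _)
  intro v hvr
  constructor
  · intro hrec
    clear hvr
    induction hrec with
    | intro v hv hall ih =>
      constructor
      · obtain ⟨u, hu⟩ := hparent v hv
        by_cases hur : u = r
        · exact Relation.ReflTransGen.single (hur ▸ hu)
        · exact ((ih u hu hur).1).tail hu
      · intro r' hr' hr'r hpath
        cases hpath with
        | refl => exact hv hr'
        | @tail b _ hb hstep =>
          by_cases hbr : b = r
          · exact hr'r (root_no_in r hr r' (hbr ▸ hb))
          · exact (ih b hstep hbr).2 r' hr' hr'r hb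
  · rintro ⟨hreach, hno⟩
    have key : ∀ v, v ≠ r → Relation.ReflTransGen P r v →
        (∀ r' ∈ roots, r' ≠ r → ¬ Relation.ReflTransGen P r' v) →
        Reclaimed P roots r v := by
      intro v
      induction v using hacyc.induction with
      | _ v ih =>
        intro hvr hreach hno
        have hv : v ∉ roots := fun hmem =>
          hvr (root_no_in v hmem r hreach).symm
        refine Reclaimed.intro v hv ?_
        intro u hu hur
        have hnou : ∀ r' ∈ roots, r' ≠ r → ¬ Relation.ReflTransGen P r' u :=
          fun r' h1 h2 hp => hno r' h1 h2 (hp.tail hu)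
        obtain ⟨ρ, hρ, hpath⟩ := reach_root u
        have hρr : ρ = r := by
          by_contra h
          exact hnou ρ hρ h hpath
        exact ih u hu hur (hρr ▸ hpath) hnou
    exact key v hvr hreach hno
end

section
/- For the C-ART insertion procedure, if a full leaf (containing B vertices) shared by multiple keys is split at the first key with pointer offset at least B/2, then after the split each of the two resulting leaves holds at least 1 and at most B − 1 vertices, and every key still points to the leaf containing exactly the vertices that extend it. -/
/-- The segment of a list from position `a` (inclusive) to position `b`
(exclusive). -/
def seg {V : Type} (l : List V) (a b : ℕ) : List V := (l.drop a).take (b - a)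

/-- The right endpoint of the vertex range of key `j`: the offset of the next
key, or `B` for the last key. -/
def nextOff {m : ℕ} (B : ℕ) (offsets : Fin m → ℕ) (j : Fin m) : ℕ :=
  if h : j.1 + 1 < m then offsets ⟨j.1 + 1, h⟩ else B

/-- **Correctness of the C-ART leaf split.** A full leaf stores `B` vertices
and is shared by `m ≥ 2` keys with strictly increasing pointer offsets
starting at `0` and all below `B` (key `j`'s offset is the index of the first
vertex extending key `j`). Splitting at the first key `j*` whose offset is at
least `B / 2` partitions the vertex sequence at that offset. Then each of the
two resulting leaves holds at least `1` and at most `B - 1` vertices, and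
every key still points to the leaf containing exactly the vertices that
extend it: keys before `j*` keep their vertex segments at unchanged offsets in
the left leaf, and keys from `j*` on find their vertex segments in the right
leaf shifted down by `offsets j*`. -/
theorem cart_leaf_split_correct {V : Type} (B m : ℕ) (hB : 2 ≤ B) (hm : 2 ≤ m)
    (leaf : List V) (hlen : leaf.length = B)
    (offsets : Fin m → ℕ) (hmono : StrictMono offsets)
    (h0 : offsets ⟨0, by omega⟩ = 0) (hlt : ∀ j, offsets j < B)
    (jstar : Fin m) (hstar : B / 2 ≤ offsets jstar)
    (hfirst : ∀ j, B / 2 ≤ offsets j → jstar ≤ j) :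
    (1 ≤ (leaf.take (offsets jstar)).length ∧
      (leaf.take (offsets jstar)).length ≤ B - 1) ∧
    (1 ≤ (leaf.drop (offsets jstar)).length ∧
      (leaf.drop (offsets jstar)).length ≤ B - 1) ∧
    (∀ j : Fin m,
      (j < jstar →
        seg leaf (offsets j) (nextOff B offsets j) =
          seg (leaf.take (offsets jstar)) (offsets j) (nextOff B offsets j)) ∧
      (jstar ≤ j →
        seg leaf (offsets j) (nextOff B offsets j) =
          seg (leaf.drop (offsets jstar)) (offsets j - offsets jstar)
            (nextOff B offsets j - offsets jstar))) := by
  set s := offsets jstar with hs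
  have hsB : s < B := hlt jstar
  have hspos : 1 ≤ s := by have := hstar; omega
  have htake : (leaf.take s).length = s := by
    rw [List.length_take, hlen]; omega
  have hdrop : (leaf.drop s).length = B - s := by
    rw [List.length_drop, hlen]
  refine ⟨⟨by omega, by omega⟩, ⟨by omega, by omega⟩, fun j => ⟨?_, ?_⟩⟩
  · intro hj
    have hj1 : j.1 + 1 < m := by
      have := jstar.2; have : j.1 < jstar.1 := hj; omega
    have hnext : nextOff B offsets j = offsets ⟨j.1 + 1, hj1⟩ := by
      simp [nextOff, hj1]
    have hle : nextOff B offsets j ≤ s := by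
      rw [hnext]
      exact hmono.monotone (by exact hj)
    simp only [seg, List.drop_take]
    rw [List.take_take]
    congr 1
    omega
  · intro hj
    have hsle : s ≤ offsets j := hmono.monotone hj
    have hble : s ≤ nextOff B offsets j := by
      unfold nextOff
      split
      · exact le_trans hsle (le_of_lt (hmono (by simp [Fin.lt_def])))
      · omega
    simp only [seg, List.drop_drop]
    rw [Nat.add_sub_cancel' hsle]
    congr 1
    omega
end
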